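/- arXiv:1703.10503 — 7 statements merged into one kernel-verified Lean document; each statement's English description precedes it below -/
import Mathlib

section
/- For all real numbers x and y, |sin(x)/x - sin(y)/y| ≤ C · ||x| - |y|| · min(|x| + |y|, 1/(|x| + |y|)) for some absolute constant C > 0 (with sin(0)/0 interpreted as 1). -/
/-!
Reduce to `0 ≤ y ≤ x` by evenness of sinc. Near the origin, the mean value theorem and
`|t cos t - sin t| ≤ t³ / 2` give `|sinc x - sinc y| ≤ x (x - y) / 2`. Far from it, the identity
`x (sinc x - sinc y) = (sin x - sin y) - (x - y) sinc y` and the 1-Lipschitz property of `sin`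
give `x |sinc x - sinc y| ≤ 2 (x - y)`. Since `(x + y) / 2 ≤ x ≤ x + y`, these are the two
halves of the bound, with `C = 4`.
-/

/-- The sinc function, extended by continuity to equal `1` at `0`. -/
noncomputable def sinc (x : ℝ) : ℝ := if x = 0 then 1 else Real.sin x / x

theorem sinc_eq_real_sinc : sinc = Real.sinc := rfl

namespace Real

-- Inside this namespace `sinc` resolves to Mathlib's `Real.sinc`.

lemma sinc_abs (x : ℝ) : sinc |x| = sinc x := by
  rcases abs_choice x with h | h <;> rw [h]
  exact sinc_neg x

lemma mul_sinc (x : ℝ) : x * sinc x = sin x := by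
  rcases eq_or_ne x 0 with rfl | hx
  · simp
  · rw [sinc_of_ne_zero hx, mul_div_cancel₀ _ hx]

lemma hasDerivAt_sinc_of_ne_zero {x : ℝ} (hx : x ≠ 0) :
    HasDerivAt sinc ((x * cos x - sin x) / x ^ 2) x := by
  have hquot := (hasDerivAt_sin x).div (hasDerivAt_id x) hx
  have heq : sinc =ᶠ[nhds x] fun t => sin t / t := by
    filter_upwards [isOpen_ne.mem_nhds hx] with t ht
    exact sinc_of_ne_zero ht
  refine (hquot.congr_of_eventuallyEq heq).congr_deriv ?_
  simp only [id]
  ring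

lemma abs_mul_cos_sub_sin_le {t : ℝ} (ht : 0 ≤ t) : |t * cos t - sin t| ≤ t ^ 3 / 2 := by
  have hcos_le := cos_le_one t
  have hcos_ge : 1 - t ^ 2 / 2 ≤ cos t := one_sub_sq_div_two_le_cos
  have hsin_le := sin_le ht
  have hsin_ge := sin_ge_sub_cube ht
  rw [abs_le]
  constructor <;> nlinarith [mul_le_mul_of_nonneg_left hcos_le ht,
    mul_le_mul_of_nonneg_left hcos_ge ht, pow_nonneg ht 3]

lemma abs_sinc_sub_sinc_le {x y : ℝ} (hy : 0 ≤ y) (hyx : y ≤ x) :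
    |sinc x - sinc y| ≤ x * (x - y) / 2 := by
  rcases hyx.eq_or_lt with rfl | hlt
  · simp
  obtain ⟨c, ⟨hyc, hcx⟩, hc⟩ := exists_hasDerivAt_eq_slope sinc _ hlt
    continuous_sinc.continuousOn
    fun t ht => hasDerivAt_sinc_of_ne_zero (hy.trans_lt ht.1).ne'
  have hc0 : 0 < c := hy.trans_lt hyc
  have hderiv : |(c * cos c - sin c) / c ^ 2| ≤ x / 2 := by
    rw [abs_div, abs_of_pos (pow_pos hc0 2), div_le_iff₀ (pow_pos hc0 2)]
    refine (abs_mul_cos_sub_sin_le hc0.le).trans ?_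
    calc c ^ 3 / 2 = c / 2 * c ^ 2 := by ring
      _ ≤ x / 2 * c ^ 2 := by gcongr
  rw [hc, abs_div, abs_of_pos (sub_pos.2 hlt), div_le_iff₀ (sub_pos.2 hlt)] at hderiv
  linarith

lemma abs_mul_sinc_sub_sinc_le (x y : ℝ) : |x * (sinc x - sinc y)| ≤ 2 * |x - y| := by
  have hsplit : x * (sinc x - sinc y) = (sin x - sin y) - (x - y) * sinc y := by
    linear_combination mul_sinc x - mul_sinc y
  calc |x * (sinc x - sinc y)|
      ≤ |sin x - sin y| + |x - y| * |sinc y| := by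
        rw [hsplit, ← abs_mul]; exact abs_sub _ _
    _ ≤ |x - y| + |x - y| * 1 :=
        add_le_add (abs_sin_sub_sin_le x y)
          (mul_le_mul_of_nonneg_left (abs_sinc_le_one y) (abs_nonneg _))
    _ = 2 * |x - y| := by ring

lemma abs_sinc_sub_sinc_le_min {x y : ℝ} (hy : 0 ≤ y) (hyx : y ≤ x) :
    |sinc x - sinc y| ≤ 4 * (x - y) * min (x + y) (1 / (x + y)) := by
  rcases hyx.eq_or_lt with rfl | hlt
  · simp
  have hx : 0 < x := hy.trans_lt hlt
  have hsum : 0 < x + y := by linarith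
  have hdiff : 0 ≤ x - y := by linarith
  have hnear := abs_sinc_sub_sinc_le hy hyx
  have hfar : x * |sinc x - sinc y| ≤ 2 * (x - y) := by
    simpa [abs_mul, abs_of_pos hx, abs_of_nonneg hdiff] using abs_mul_sinc_sub_sinc_le x y
  rw [mul_min_of_nonneg _ _ (by positivity)]
  refine le_min ?_ ?_
  · nlinarith
  · rw [mul_one_div, le_div_iff₀ hsum]
    nlinarith [abs_nonneg (sinc x - sinc y)]

end Real

/-- There is an absolute constant `C > 0` such that for all real `x`, `y`,
`|sin x / x - sin y / y| ≤ C * |(|x| - |y|)| * min (|x| + |y|) (1 / (|x| + |y|))`. -/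
theorem stmt0 :
    ∃ C : ℝ, 0 < C ∧ ∀ x y : ℝ,
      |sinc x - sinc y| ≤ C * |(|x| - |y|)| * min (|x| + |y|) (1 / (|x| + |y|)) := by
  refine ⟨4, by norm_num, fun x y => ?_⟩
  rw [sinc_eq_real_sinc, ← Real.sinc_abs x, ← Real.sinc_abs y]
  rcases le_total |y| |x| with h | h
  · rw [abs_of_nonneg (sub_nonneg.2 h)]
    exact Real.abs_sinc_sub_sinc_le_min (abs_nonneg y) h
  · rw [abs_sub_comm, abs_sub_comm |x|, add_comm, abs_of_nonneg (sub_nonneg.2 h)]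
    exact Real.abs_sinc_sub_sinc_le_min (abs_nonneg x) h
end

section
/- Let a > 0, b ∈ ℝ, c > 0 with b + c ≥ b - c ≥ 0, and t ≥ 0. Then |(1/c)[ (1/√(b+c))(e^{(-a+√(b+c))t} - e^{(-a-√(b+c))t}) - (1/√(b-c))(e^{(-a+√(b-c))t} - e^{(-a-√(b-c))t}) ]| ≤ C t³ e^{(-a+√(b+c))t} for some absolute constant C. -/
/-!
Write `S x = sinh x / x`, extended by `S 0 = 1`; in Mathlib this is `dslope sinh 0`. With
`u = √(b+c)` and `v = √(b-c)`, both quotients are `2 t e^{-at} S(wt)` (for `w = u, v`; the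
degenerate convention is exactly `S 0 = 1`), so the quantity is `(2 t e^{-at} / c) (S(ut) - S(vt))`.
On `[0, ∞)`, `S' x = (x cosh x - sinh x) / x²` lies in `[0, x eˣ]`, so by the mean value theorem
`0 ≤ S(ut) - S(vt) ≤ u t e^{ut} (u - v) t`, and `u (u - v) ≤ u² - v² = 2c` gives `C = 4`.
-/

open Real Set

lemma sinh_le_mul_cosh {x : ℝ} (hx : 0 ≤ x) : sinh x ≤ x * cosh x := by
  have hmono : Monotone (fun y => y * cosh y - sinh y) :=
    monotone_of_hasDerivAt_nonneg (f' := fun y => y * sinh y)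
      (fun y => (((hasDerivAt_id' y).fun_mul (hasDerivAt_cosh y)).fun_sub
        (hasDerivAt_sinh y)).congr_deriv (by ring))
      fun y => by
        rcases le_total 0 y with hy | hy
        · exact mul_nonneg hy (sinh_nonneg_iff.mpr hy)
        · exact mul_nonneg_of_nonpos_of_nonpos hy (sinh_nonpos_iff.mpr hy)
  simpa using hmono hx

lemma cosh_le_exp {x : ℝ} (hx : 0 ≤ x) : cosh x ≤ exp x := by
  rw [cosh_eq]
  linarith [exp_le_exp.mpr (show -x ≤ x by linarith)]

lemma mul_cosh_sub_sinh_le {x : ℝ} (hx : 0 ≤ x) : x * cosh x - sinh x ≤ x ^ 3 * exp x := by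
  have hmono : MonotoneOn (fun y => y ^ 3 * exp y - (y * cosh y - sinh y)) (Ici 0) := by
    refine monotoneOn_of_hasDerivWithinAt_nonneg (convex_Ici 0)
      (f' := fun y => 3 * y ^ 2 * exp y + y ^ 3 * exp y - y * sinh y) (by fun_prop)
      (fun y _ => ?_) fun y hy => ?_
    · exact ((((hasDerivAt_pow 3 y).fun_mul (hasDerivAt_exp y)).fun_sub
        (((hasDerivAt_id' y).fun_mul (hasDerivAt_cosh y)).fun_sub
          (hasDerivAt_sinh y))).congr_deriv (by push_cast; ring)).hasDerivWithinAt
    · rw [interior_Ici, mem_Ioi] at hy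
      have hsinh : y * sinh y ≤ y ^ 2 * exp y := calc
        y * sinh y ≤ y * (y * cosh y) := mul_le_mul_of_nonneg_left (sinh_le_mul_cosh hy.le) hy.le
        _ ≤ y ^ 2 * exp y := by nlinarith [cosh_le_exp hy.le]
      have hpos : 0 ≤ y ^ 2 * exp y + y ^ 3 * exp y := by positivity
      nlinarith [hsinh, hpos]
  simpa using hmono self_mem_Ici hx hx

lemma dslope_sinh_zero_of_ne {x : ℝ} (hx : x ≠ 0) : dslope sinh 0 x = sinh x / x := by
  rw [dslope_of_ne _ hx, slope_def_field, sinh_zero, sub_zero, sub_zero]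

lemma continuous_dslope_sinh : Continuous (dslope sinh 0) :=
  continuousOn_univ.1 <| (continuousOn_dslope Filter.univ_mem).2
    ⟨continuous_sinh.continuousOn, differentiable_sinh 0⟩

lemma hasDerivAt_dslope_sinh {x : ℝ} (hx : x ≠ 0) :
    HasDerivAt (dslope sinh 0) ((x * cosh x - sinh x) / x ^ 2) x := by
  have hslope : slope sinh 0 = fun y => sinh y / y := by
    ext y; simp [slope_def_field]
  refine (((hasDerivAt_sinh x).fun_div (hasDerivAt_id' x) hx).congr_deriv
    (by ring)).congr_of_eventuallyEq ?_
  simpa [hslope] using dslope_eventuallyEq_slope_of_ne sinh hx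

lemma monotoneOn_dslope_sinh : MonotoneOn (dslope sinh 0) (Ici 0) := by
  refine monotoneOn_of_hasDerivWithinAt_nonneg (convex_Ici 0) continuous_dslope_sinh.continuousOn
    (fun x hx => (hasDerivAt_dslope_sinh ?_).hasDerivWithinAt) fun x hx => ?_
  all_goals rw [interior_Ici, mem_Ioi] at hx
  · exact hx.ne'
  · exact div_nonneg (sub_nonneg.2 (sinh_le_mul_cosh hx.le)) (sq_nonneg x)

lemma dslope_sinh_sub_le {x y : ℝ} (hy : 0 ≤ y) (hyx : y ≤ x) :
    dslope sinh 0 x - dslope sinh 0 y ≤ x * exp x * (x - y) := by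
  refine (convex_Icc 0 x).image_sub_le_mul_sub_of_deriv_le continuous_dslope_sinh.continuousOn
    (fun z hz => ?_) (fun z hz => ?_) y ⟨hy, hyx⟩ x ⟨hy.trans hyx, le_rfl⟩ hyx
  all_goals rw [interior_Icc] at hz
  · exact (hasDerivAt_dslope_sinh hz.1.ne').differentiableAt.differentiableWithinAt
  · rw [(hasDerivAt_dslope_sinh hz.1.ne').deriv, div_le_iff₀ (pow_pos hz.1 2)]
    calc z * cosh z - sinh z ≤ z ^ 3 * exp z := mul_cosh_sub_sinh_le hz.1.le
      _ = z * exp z * z ^ 2 := by ring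
      _ ≤ x * exp x * z ^ 2 := by gcongr <;> linarith [hz.1, hz.2]

lemma one_div_mul_exp_sub_exp_eq (a w t : ℝ) (hw : w ≠ 0) :
    1 / w * (exp ((-a + w) * t) - exp ((-a - w) * t))
      = 2 * t * exp (-a * t) * dslope sinh 0 (w * t) := by
  rcases eq_or_ne t 0 with rfl | ht
  · simp
  rw [dslope_sinh_zero_of_ne (mul_ne_zero hw ht), sinh_eq,
    show (-a + w) * t = -a * t + w * t by ring, show (-a - w) * t = -a * t + -(w * t) by ring,
    exp_add, exp_add]
  field_simp

lemma ite_eq_dslope_sinh (a b c t : ℝ) (hbc : 0 ≤ b - c) :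
    (if b = c then 2 * t * exp (-a * t)
      else 1 / √(b - c) * (exp ((-a + √(b - c)) * t) - exp ((-a - √(b - c)) * t)))
      = 2 * t * exp (-a * t) * dslope sinh 0 (√(b - c) * t) := by
  split_ifs with hb
  · simp [hb]
  · exact one_div_mul_exp_sub_exp_eq a _ t
      (sqrt_ne_zero'.2 (lt_of_le_of_ne hbc (Ne.symm (sub_ne_zero.2 hb))))

/-- Lemma A.1 of the paper, case `b + c ≥ b - c ≥ 0`: there is an absolute constant `C` with
`|I| ≤ C t³ e^{(-a+√(b+c))t}`, where in the degenerate case `b - c = 0` the quotient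
`(1/√(b-c))(e^{(-a+√(b-c))t} - e^{(-a-√(b-c))t})` is interpreted as its limit `2 t e^{-at}`. -/
theorem stmt2 :
    ∃ C : ℝ, 0 < C ∧ ∀ a b c t : ℝ, 0 < a → 0 < c → 0 ≤ b - c → 0 ≤ t →
      |(1 / c) * ((1 / Real.sqrt (b + c)) *
          (Real.exp ((-a + Real.sqrt (b + c)) * t) - Real.exp ((-a - Real.sqrt (b + c)) * t))
        - (if b = c then 2 * t * Real.exp (-a * t)
            else (1 / Real.sqrt (b - c)) *
              (Real.exp ((-a + Real.sqrt (b - c)) * t)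
                - Real.exp ((-a - Real.sqrt (b - c)) * t))))|
      ≤ C * t ^ 3 * Real.exp ((-a + Real.sqrt (b + c)) * t) := by
  refine ⟨4, by norm_num, fun a b c t _ hc hbc ht => ?_⟩
  set u := √(b + c)
  set v := √(b - c)
  have hu : 0 < u := sqrt_pos.2 (by linarith)
  have hv : 0 ≤ v := sqrt_nonneg _
  have hvu : v ≤ u := sqrt_le_sqrt (by linarith)
  have huv : u ^ 2 - v ^ 2 = 2 * c := by
    rw [sq_sqrt (by linarith), sq_sqrt hbc]; ring
  rw [ite_eq_dslope_sinh a b c t hbc, one_div_mul_exp_sub_exp_eq a u t hu.ne']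
  have hdiff := dslope_sinh_sub_le (mul_nonneg hv ht) (mul_le_mul_of_nonneg_right hvu ht)
  have hmono := monotoneOn_dslope_sinh (mul_nonneg hv ht) (mul_nonneg hu.le ht)
    (mul_le_mul_of_nonneg_right hvu ht)
  rw [← mul_sub, ← mul_assoc, abs_of_nonneg (by have := sub_nonneg.2 hmono; positivity)]
  calc 1 / c * (2 * t * exp (-a * t)) * (dslope sinh 0 (u * t) - dslope sinh 0 (v * t))
      ≤ 1 / c * (2 * t * exp (-a * t)) * (u * t * exp (u * t) * (u * t - v * t)) :=
        mul_le_mul_of_nonneg_left hdiff (by positivity)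
    _ = 2 * t ^ 3 * exp ((-a + u) * t) * (u * (u - v) / c) := by
        rw [add_mul, exp_add]; ring
    _ ≤ 2 * t ^ 3 * exp ((-a + u) * t) * 2 := by
        gcongr
        rw [div_le_iff₀ hc]
        nlinarith [mul_nonneg hv (sub_nonneg.2 hvu)]
    _ = 4 * t ^ 3 * exp ((-a + u) * t) := by ring
end

section
/- Let c > 0, α ∈ ℝ, β > -1, and N > 0. There exists a constant C = C(c, α, β) such that for all t ≥ 0: ∬_{N/2 ≤ √(ξ²+η²) ≤ 2N} |ξ|^β (ξ²+η²)^{-α/2} e^{-c ξ² t/(ξ²+η²)} dξ dη ≤ C N^{β+2-α} (1+t)^{-(1+β)/2}. -/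
/-!
On the annulus `A ≍ N`, so `A^{-α} ≤ 2^|α| N^{-α}` and `e^{-c ξ² t / A²} ≤ e^{-c t ξ² / (2N)²}`:
the integrand is dominated by a function of `ξ` alone on the square `[-2N, 2N]²`.
For `|ξ| ≤ R` a factor `e` buys one more Gaussian weight, `e^{-T ξ²/R²} ≤ e · e^{-(1+T) ξ²/R²}`,
and the full-line integral `∫ |ξ|^β e^{-b ξ²} dξ = b^{-(β+1)/2} Γ((β+1)/2)` then produces both the
factor `R^{β+1}` and the decay `(1+T)^{-(β+1)/2}`.
-/

open MeasureTheory Real Set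

theorem integral_abs_rpow_mul_exp_neg_mul_sq {b s : ℝ} (hb : 0 < b) (hs : -1 < s) :
    ∫ x : ℝ, |x| ^ s * exp (-b * x ^ 2) = b ^ (-(s + 1) / 2) * Gamma ((s + 1) / 2) := by
  have h := integral_rpow_mul_exp_neg_mul_rpow two_pos hs hb
  simp only [rpow_two] at h
  have h_abs := integral_comp_abs (f := fun x : ℝ => x ^ s * exp (-b * x ^ 2))
  simp only [sq_abs] at h_abs
  rw [h_abs, h]
  ring

theorem integrable_abs_rpow_mul_exp_neg_mul_sq {b s : ℝ} (hb : 0 < b) (hs : -1 < s) :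
    Integrable fun x : ℝ => |x| ^ s * exp (-b * x ^ 2) := by
  refine Integrable.of_integral_ne_zero ?_
  have := Gamma_pos_of_pos (show 0 < (s + 1) / 2 by linarith)
  rw [integral_abs_rpow_mul_exp_neg_mul_sq hb hs]
  positivity

theorem abs_rpow_mul_exp_neg_div_sq_mul_sq_le {s T R x : ℝ} (hR : 0 < R) (hx : x ∈ Icc (-R) R) :
    |x| ^ s * exp (-(T / R ^ 2) * x ^ 2)
      ≤ exp 1 * (|x| ^ s * exp (-((1 + T) / R ^ 2) * x ^ 2)) := by
  have hxR : x ^ 2 / R ^ 2 ≤ 1 := div_le_one_of_le₀ (sq_le_sq' hx.1 hx.2) (by positivity)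
  have hexp : exp (-(T / R ^ 2) * x ^ 2) ≤ exp 1 * exp (-((1 + T) / R ^ 2) * x ^ 2) := by
    rw [← exp_add, exp_le_exp]
    have : (1 + T) / R ^ 2 * x ^ 2 = T / R ^ 2 * x ^ 2 + x ^ 2 / R ^ 2 := by ring
    linarith
  rw [mul_left_comm]
  exact mul_le_mul_of_nonneg_left hexp (by positivity)

section GaussianOnInterval

variable {s T R : ℝ} (hs : -1 < s) (hT : 0 ≤ T) (hR : 0 < R)
include hs hT hR

theorem integrableOn_Icc_abs_rpow_mul_exp_neg_div_sq_mul_sq :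
    IntegrableOn (fun x => |x| ^ s * exp (-(T / R ^ 2) * x ^ 2)) (Icc (-R) R) := by
  have hint := (integrable_abs_rpow_mul_exp_neg_mul_sq (b := (1 + T) / R ^ 2) (by positivity)
    hs).const_mul (exp 1)
  refine hint.integrableOn.mono' (by fun_prop)
    (ae_restrict_of_forall_mem measurableSet_Icc fun x hx => ?_)
  rw [norm_of_nonneg (by positivity)]
  exact abs_rpow_mul_exp_neg_div_sq_mul_sq_le hR hx

theorem setIntegral_Icc_abs_rpow_mul_exp_neg_div_sq_mul_sq_le :
    ∫ x in Icc (-R) R, |x| ^ s * exp (-(T / R ^ 2) * x ^ 2)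
      ≤ exp 1 * Gamma ((s + 1) / 2) * R ^ (s + 1) * (1 + T) ^ (-(s + 1) / 2) := by
  have hb : 0 < (1 + T) / R ^ 2 := by positivity
  have hint := (integrable_abs_rpow_mul_exp_neg_mul_sq hb hs).const_mul (exp 1)
  have hscale : ((1 + T) / R ^ 2) ^ (-(s + 1) / 2) = (1 + T) ^ (-(s + 1) / 2) * R ^ (s + 1) := by
    rw [div_rpow (by positivity) (by positivity), ← rpow_natCast, ← rpow_mul hR.le,
      div_eq_mul_inv, ← rpow_neg hR.le]
    congr 2
    push_cast
    ring
  calc ∫ x in Icc (-R) R, |x| ^ s * exp (-(T / R ^ 2) * x ^ 2)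
      ≤ ∫ x in Icc (-R) R, exp 1 * (|x| ^ s * exp (-((1 + T) / R ^ 2) * x ^ 2)) :=
        setIntegral_mono_on (integrableOn_Icc_abs_rpow_mul_exp_neg_div_sq_mul_sq hs hT hR)
          hint.integrableOn measurableSet_Icc fun x hx => abs_rpow_mul_exp_neg_div_sq_mul_sq_le hR hx
    _ ≤ ∫ x, exp 1 * (|x| ^ s * exp (-((1 + T) / R ^ 2) * x ^ 2)) :=
        setIntegral_le_integral hint (Filter.Eventually.of_forall fun x => by positivity)
    _ = exp 1 * Gamma ((s + 1) / 2) * R ^ (s + 1) * (1 + T) ^ (-(s + 1) / 2) := by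
        rw [integral_const_mul, integral_abs_rpow_mul_exp_neg_mul_sq hb hs, hscale]
        ring

end GaussianOnInterval

theorem one_add_mul_rpow_le {c t γ : ℝ} (hc : 0 < c) (ht : 0 ≤ t) (hγ : γ ≤ 0) :
    (1 + c * t) ^ γ ≤ min c 1 ^ γ * (1 + t) ^ γ := by
  have hm : 0 < min c 1 := lt_min hc one_pos
  rw [← mul_rpow hm.le (by positivity)]
  refine rpow_le_rpow_of_nonpos (by positivity) ?_ hγ
  nlinarith [min_le_left c 1, min_le_right c 1]

theorem rpow_le_two_rpow_abs_mul_rpow {N r γ : ℝ} (hN : 0 < N) (h₁ : N / 2 ≤ r) (h₂ : r ≤ 2 * N) :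
    r ^ γ ≤ 2 ^ |γ| * N ^ γ := by
  rcases le_total 0 γ with hγ | hγ
  · calc r ^ γ ≤ (2 * N) ^ γ := rpow_le_rpow (by linarith) h₂ hγ
      _ = 2 ^ |γ| * N ^ γ := by rw [abs_of_nonneg hγ, mul_rpow zero_le_two hN.le]
  · calc r ^ γ ≤ (N / 2) ^ γ := rpow_le_rpow_of_nonpos (by positivity) h₁ hγ
      _ = 2 ^ |γ| * N ^ γ := by
        rw [abs_of_nonpos hγ, div_rpow hN.le zero_le_two, rpow_neg zero_le_two, div_eq_inv_mul]

def annulus (N : ℝ) : Set (ℝ × ℝ) :=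
  {p | N / 2 ≤ Real.sqrt (p.1 ^ 2 + p.2 ^ 2) ∧ Real.sqrt (p.1 ^ 2 + p.2 ^ 2) ≤ 2 * N}

theorem measurableSet_annulus (N : ℝ) : MeasurableSet (annulus N) := by
  have hA : Measurable fun p : ℝ × ℝ => Real.sqrt (p.1 ^ 2 + p.2 ^ 2) := by fun_prop
  exact (measurableSet_le measurable_const hA).inter (measurableSet_le hA measurable_const)

theorem annulus_subset_square (N : ℝ) :
    annulus N ⊆ Icc (-(2 * N)) (2 * N) ×ˢ Icc (-(2 * N)) (2 * N) := by
  rintro ⟨x, y⟩ ⟨-, h⟩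
  have hx : |x| ≤ 2 * N := (abs_le_sqrt (by nlinarith)).trans h
  have hy : |y| ≤ 2 * N := (abs_le_sqrt (by nlinarith)).trans h
  exact ⟨abs_le.1 hx, abs_le.1 hy⟩

theorem integrand_le_on_annulus {c α β t N : ℝ} (hc : 0 ≤ c) (ht : 0 ≤ t) (hN : 0 < N) {p : ℝ × ℝ}
    (hp : p ∈ annulus N) :
    |p.1| ^ β * (p.1 ^ 2 + p.2 ^ 2) ^ (-α / 2) * exp (-c * p.1 ^ 2 * t / (p.1 ^ 2 + p.2 ^ 2))
      ≤ 2 ^ |α| * N ^ (-α) * (|p.1| ^ β * exp (-(c * t / (2 * N) ^ 2) * p.1 ^ 2)) := by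
  obtain ⟨h₁, h₂⟩ := hp
  set A := p.1 ^ 2 + p.2 ^ 2
  have hA : 0 < A := sqrt_pos.1 (by linarith)
  have hA₂ : A ≤ (2 * N) ^ 2 := (sqrt_le_left (by positivity)).1 h₂
  have hpow : A ^ (-α / 2) ≤ 2 ^ |α| * N ^ (-α) := by
    rw [← abs_neg α, show -α / 2 = (1 / 2) * -α by ring, rpow_mul hA.le, ← sqrt_eq_rpow]
    exact rpow_le_two_rpow_abs_mul_rpow hN h₁ h₂
  have hexp : exp (-c * p.1 ^ 2 * t / A) ≤ exp (-(c * t / (2 * N) ^ 2) * p.1 ^ 2) := by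
    rw [exp_le_exp, neg_mul, neg_mul, neg_mul, neg_div, neg_le_neg_iff, div_mul_eq_mul_div,
      mul_right_comm]
    exact div_le_div_of_nonneg_left (by positivity) hA hA₂
  calc |p.1| ^ β * A ^ (-α / 2) * exp (-c * p.1 ^ 2 * t / A)
      ≤ |p.1| ^ β * (2 ^ |α| * N ^ (-α)) * exp (-(c * t / (2 * N) ^ 2) * p.1 ^ 2) := by
        gcongr
    _ = _ := by ring

theorem setIntegral_le_of_le_comp_fst {I J : Set ℝ} {f : ℝ × ℝ → ℝ} {g : ℝ → ℝ} {S : Set (ℝ × ℝ)}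
    (hS : MeasurableSet S) (hSIJ : S ⊆ I ×ˢ J) (hJ : volume J ≠ ⊤)
    (hf₀ : ∀ p ∈ S, 0 ≤ f p) (hfg : ∀ p ∈ S, f p ≤ g p.1) (hg₀ : ∀ x, 0 ≤ g x)
    (hg : IntegrableOn g I) :
    ∫ p in S, f p ≤ volume.real J * ∫ x in I, g x := by
  have hvol : (volume.restrict (I ×ˢ J)) = (volume.restrict I).prod (volume.restrict J) := by
    rw [Measure.volume_eq_prod, Measure.prod_restrict]
  have : IsFiniteMeasure (volume.restrict J) := isFiniteMeasure_restrict.2 hJ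
  have hG : IntegrableOn (fun p : ℝ × ℝ => g p.1) (I ×ˢ J) := by
    rw [IntegrableOn, hvol]
    exact hg.comp_fst _
  calc ∫ p in S, f p ≤ ∫ p in S, g p.1 :=
        integral_mono_of_nonneg (ae_restrict_of_forall_mem hS hf₀) (hG.mono_set hSIJ)
          (ae_restrict_of_forall_mem hS hfg)
    _ ≤ ∫ p in I ×ˢ J, g p.1 :=
        setIntegral_mono_set hG (Filter.Eventually.of_forall fun p => hg₀ p.1) hSIJ.eventuallyLE
    _ = volume.real J * ∫ x in I, g x := by
        rw [hvol, integral_fun_fst, smul_eq_mul, measureReal_restrict_apply_univ, mul_comm]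

/-- For `c > 0`, `α ∈ ℝ`, `β > -1` there is `C = C(c, α, β)` such that for every dyadic scale
`N > 0` and every `t ≥ 0`,
`∬_{N/2 ≤ A ≤ 2N} |ξ|^β A^{-α} e^{-c ξ² t / A²} dξ dη ≤ C N^{β+2-α} (1+t)^{-(1+β)/2}`,
where `A = √(ξ²+η²)`. -/
theorem stmt4 (c α β : ℝ) (hc : 0 < c) (hβ : -1 < β) :
    ∃ C : ℝ, 0 < C ∧ ∀ N : ℝ, 0 < N → ∀ t : ℝ, 0 ≤ t →
      (∫ p in {p : ℝ × ℝ | N / 2 ≤ Real.sqrt (p.1 ^ 2 + p.2 ^ 2) ∧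
            Real.sqrt (p.1 ^ 2 + p.2 ^ 2) ≤ 2 * N},
          |p.1| ^ β * (p.1 ^ 2 + p.2 ^ 2) ^ (-α / 2) *
            Real.exp (-c * p.1 ^ 2 * t / (p.1 ^ 2 + p.2 ^ 2)))
        ≤ C * N ^ (β + 2 - α) * (1 + t) ^ (-(1 + β) / 2) := by
  have hΓ := Gamma_pos_of_pos (show 0 < (β + 1) / 2 by linarith)
  refine ⟨2 ^ |α| * 2 ^ (β + 3) * exp 1 * Gamma ((β + 1) / 2) * min c 1 ^ (-(β + 1) / 2),
    by positivity, fun N hN t ht => ?_⟩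
  have hR : 0 < 2 * N := by positivity
  have h1D : ∫ x in Icc (-(2 * N)) (2 * N), |x| ^ β * exp (-(c * t / (2 * N) ^ 2) * x ^ 2)
      ≤ exp 1 * Gamma ((β + 1) / 2) * (2 * N) ^ (β + 1) *
          (min c 1 ^ (-(β + 1) / 2) * (1 + t) ^ (-(β + 1) / 2)) := by
    refine (setIntegral_Icc_abs_rpow_mul_exp_neg_div_sq_mul_sq_le hβ (by positivity) hR).trans ?_
    gcongr
    exact one_add_mul_rpow_le hc ht (by linarith)
  calc _ ≤ (2 * N - -(2 * N)) * ∫ x in Icc (-(2 * N)) (2 * N),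
        2 ^ |α| * N ^ (-α) * (|x| ^ β * exp (-(c * t / (2 * N) ^ 2) * x ^ 2)) := by
        rw [← volume_real_Icc_of_le (by linarith)]
        exact setIntegral_le_of_le_comp_fst (measurableSet_annulus N) (annulus_subset_square N)
          measure_Icc_lt_top.ne (fun p _ => by positivity)
          (fun p hp => integrand_le_on_annulus hc.le ht hN hp) (fun x => by positivity)
          ((integrableOn_Icc_abs_rpow_mul_exp_neg_div_sq_mul_sq hβ (by positivity) hR).const_mul _)
    _ ≤ 4 * N * (2 ^ |α| * N ^ (-α) * (exp 1 * Gamma ((β + 1) / 2) * (2 * N) ^ (β + 1) *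
          (min c 1 ^ (-(β + 1) / 2) * (1 + t) ^ (-(β + 1) / 2)))) := by
        rw [integral_const_mul, show 2 * N - -(2 * N) = 4 * N by ring]
        gcongr
    _ = _ := by
        rw [mul_rpow zero_le_two hN.le, add_comm 1 β,
          show (2 : ℝ) ^ (β + 3) = 2 ^ (β + 1) * 4 by
            rw [show β + 3 = β + 1 + 2 by ring, rpow_add two_pos]; norm_num,
          show N ^ (β + 2 - α) = N ^ (-α) * N ^ (β + 1) * N by
            rw [← rpow_add hN, ← rpow_add_one hN.ne']; ring_nf]
        ring
end

section
/- Let c > 0, β ≥ 0, α ∈ ℝ, β' ≥ β with 2β' - β + 1 - α > 0. There exists C such that for all t ≥ 0: sup over ξ of ∫ over η of the function χ_{|ξ| ≤ A²} |ξ|^{β'} A^{-α} e^{-c ξ² t / A²} dη, restricted to the region A = √(ξ²+η²) ≤ 1, is bounded by C (1+t)^{-β/2}. -/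
/-!
Write `s = ξ² + η²` and `x = c ξ² t / s`. Since `ξ² (1 + t) ≤ K s (1 + x)` and
`(1 + x)^p ≲ eˣ`, the Gaussian factor buys the decay
`|ξ|^β e^{-x} ≲ s^{β/2} (1 + t)^{-β/2}`. On `{|ξ| ≤ s}` the remaining weight
`|ξ|^{β'-β} s^{-α/2}` is at most `s^{β'-β-α/2}`, so the integrand is
`≲ (1 + t)^{-β/2} s^{δ/2}` with `δ = 2β' - β - α > -1`. Finally `η² ≤ s ≤ 1` gives
`s^{δ/2} ≤ 1 + |η|^δ`, which is integrable on `[-1, 1]` independently of `ξ`.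
-/

open MeasureTheory Real Set

theorem sq_rpow_div_two (x r : ℝ) : (x ^ 2) ^ (r / 2) = |x| ^ r := by
  rw [← sq_abs, ← rpow_natCast, ← rpow_mul (abs_nonneg x)]; ring_nf

theorem one_add_rpow_le_mul_exp {p x : ℝ} (hp : 0 ≤ p) (hx : 0 ≤ x) :
    (1 + x) ^ p ≤ max 1 p ^ p * exp x := by
  set m := max 1 p
  have hm : 0 < m := lt_max_of_lt_left one_pos
  have hbase : 1 + x ≤ m * exp (x / m) := calc
    1 + x ≤ m * (1 + x / m) := by
      rw [mul_add, mul_div_cancel₀ x hm.ne', mul_one]; linarith [le_max_left 1 p]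
    _ ≤ m * exp (x / m) := by gcongr; linarith [add_one_le_exp (x / m)]
  calc (1 + x) ^ p ≤ (m * exp (x / m)) ^ p := by gcongr
    _ = m ^ p * exp (x / m * p) := by rw [mul_rpow hm.le (exp_pos _).le, ← exp_mul]
    _ ≤ m ^ p * exp x := by
      gcongr
      rw [div_mul_eq_mul_div, mul_div_assoc]
      exact mul_le_of_le_one_right hx ((div_le_one hm).2 (le_max_right 1 p))

theorem rpow_mul_exp_neg_le {a s c t p : ℝ} (hp : 0 ≤ p) (hc : 0 < c) (ht : 0 ≤ t)
    (ha : 0 ≤ a) (hs : 0 < s) (has : a ≤ s) :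
    a ^ p * exp (-(c * a * t / s)) ≤ (max 1 c⁻¹ * max 1 p) ^ p * s ^ p * (1 + t) ^ (-p) := by
  set K := max 1 c⁻¹
  set x := c * a * t / s
  have hK : 0 ≤ K := zero_le_one.trans (le_max_left _ _)
  have hx : 0 ≤ x := by positivity
  have hlin : a * (1 + t) ≤ K * s * (1 + x) := by
    have hKc : 1 ≤ K * c := by
      simpa [inv_mul_cancel₀ hc.ne'] using
        mul_le_mul_of_nonneg_right (le_max_right 1 c⁻¹) hc.le
    have : K * s * (1 + x) = K * s + K * c * a * t := by
      simp only [x]; field_simp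
    nlinarith [le_max_left 1 c⁻¹, mul_nonneg ha ht]
  have hprod := calc a ^ p * (1 + t) ^ p = (a * (1 + t)) ^ p := (mul_rpow ha (by linarith)).symm
    _ ≤ (K * s * (1 + x)) ^ p := by gcongr
    _ = K ^ p * s ^ p * (1 + x) ^ p := by
      rw [mul_rpow (by positivity) (by linarith), mul_rpow hK hs.le]
    _ ≤ K ^ p * s ^ p * (max 1 p ^ p * exp x) := by
      gcongr; exact one_add_rpow_le_mul_exp hp hx
  have h1t : 0 < (1 + t) ^ p := rpow_pos_of_pos (by linarith) p
  rw [rpow_neg (by linarith), exp_neg, ← div_eq_mul_inv, ← div_eq_mul_inv,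
    mul_rpow hK (by positivity), div_le_div_iff₀ (exp_pos x) h1t]
  linarith

theorem abs_rpow_mul_rpow_mul_exp_le {c α β β' t ξ s : ℝ} (hc : 0 < c) (hβ : 0 ≤ β)
    (hββ' : β ≤ β') (ht : 0 ≤ t) (hs : 0 < s) (hξs : |ξ| ≤ s) (hξ2 : ξ ^ 2 ≤ s) :
    |ξ| ^ β' * s ^ (-α / 2) * exp (-c * ξ ^ 2 * t / s) ≤
      (max 1 c⁻¹ * max 1 (β / 2)) ^ (β / 2) * (1 + t) ^ (-β / 2) *
        s ^ ((2 * β' - β - α) / 2) := by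
  set D := (max 1 c⁻¹ * max 1 (β / 2)) ^ (β / 2)
  have hdecay :
      |ξ| ^ β * exp (-c * ξ ^ 2 * t / s) ≤ D * s ^ (β / 2) * (1 + t) ^ (-β / 2) := by
    rw [← sq_rpow_div_two, neg_mul, neg_mul, neg_div, neg_div]
    exact rpow_mul_exp_neg_le (by positivity) hc ht (sq_nonneg ξ) hs hξ2
  have hsplit : |ξ| ^ β' = |ξ| ^ (β' - β) * |ξ| ^ β := by
    rw [← rpow_add_of_nonneg (abs_nonneg ξ) (by linarith) hβ, sub_add_cancel]
  have hgap : |ξ| ^ (β' - β) ≤ s ^ (β' - β) :=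
    rpow_le_rpow (abs_nonneg ξ) hξs (by linarith)
  calc |ξ| ^ β' * s ^ (-α / 2) * exp (-c * ξ ^ 2 * t / s)
      = |ξ| ^ (β' - β) * s ^ (-α / 2) * (|ξ| ^ β * exp (-c * ξ ^ 2 * t / s)) := by
        rw [hsplit]; ring
    _ ≤ s ^ (β' - β) * s ^ (-α / 2) * (D * s ^ (β / 2) * (1 + t) ^ (-β / 2)) := by
        gcongr
    _ = D * (1 + t) ^ (-β / 2) * s ^ ((2 * β' - β - α) / 2) := by
        rw [show (2 * β' - β - α) / 2 = β' - β + -α / 2 + β / 2 by ring, rpow_add hs,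
          rpow_add hs]
        ring

theorem intervalIntegrable_abs_rpow {r : ℝ} (hr : -1 < r) (a b : ℝ) :
    IntervalIntegrable (fun x => |x| ^ r) volume a b := by
  have hpos : ∀ c, 0 ≤ c → IntervalIntegrable (fun x => |x| ^ r) volume 0 c := fun c hc =>
    (intervalIntegral.intervalIntegrable_rpow' hr).congr fun x hx => by
      rw [uIoc_of_le hc] at hx
      simp only [abs_of_pos hx.1]
  have hall : ∀ c, IntervalIntegrable (fun x => |x| ^ r) volume 0 c := fun c => by
    rcases le_total 0 c with hc | hc
    · exact hpos c hc
    · simpa using (IntervalIntegrable.iff_comp_neg (by simp)).1 (hpos (-c) (by linarith))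
  exact (hall a).symm.trans (hall b)

theorem rpow_half_le_one_add_abs_rpow {s η : ℝ} (r : ℝ) (hη : η ≠ 0) (hηs : η ^ 2 ≤ s)
    (hs : s ≤ 1) : s ^ (r / 2) ≤ 1 + |η| ^ r := by
  have hη2 : 0 < η ^ 2 := by positivity
  rcases le_total 0 r with hr | hr
  · have : s ^ (r / 2) ≤ 1 := rpow_le_one (hη2.trans_le hηs).le hs (by linarith)
    linarith [rpow_nonneg (abs_nonneg η) r]
  · have : s ^ (r / 2) ≤ (η ^ 2) ^ (r / 2) := rpow_le_rpow_of_nonpos hη2 hηs (by linarith)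
    linarith [sq_rpow_div_two η r]

theorem integrableOn_one_add_abs_rpow {r : ℝ} (hr : -1 < r) :
    IntegrableOn (fun x : ℝ => 1 + |x| ^ r) (Icc (-1) 1) :=
  (intervalIntegrable_iff_integrableOn_Icc_of_le (by norm_num)).1
    (intervalIntegrable_const.add (intervalIntegrable_abs_rpow hr _ _))

theorem setIntegral_le_setIntegral_of_subset {α : Type*} [MeasurableSpace α] {μ : Measure α}
    {f g : α → ℝ} {S T : Set α} (hST : S ⊆ T) (hf : 0 ≤ᵐ[μ.restrict S] f)
    (hg : 0 ≤ᵐ[μ.restrict T] g) (hgi : IntegrableOn g T μ) (hfg : f ≤ᵐ[μ.restrict S] g) :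
    ∫ x in S, f x ∂μ ≤ ∫ x in T, g x ∂μ :=
  (integral_mono_of_nonneg hf (hgi.mono_set hST) hfg).trans
    (setIntegral_mono_set hgi hg hST.eventuallyLE)

/-- For `c > 0`, `β ≥ 0`, `α ∈ ℝ`, `β' ≥ β` with `2β' - β + 1 - α > 0`, there is a constant
`C` such that for all `t ≥ 0` and all `ξ`, the `η`-integral of
`χ_{|ξ| ≤ A²} |ξ|^{β'} A^{-α} e^{-c ξ² t / A²}` over the region `A = √(ξ²+η²) ≤ 1` is bounded
by `C (1+t)^{-β/2}` (i.e. the `L^∞_ξ L^1_η` bound). -/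
theorem stmt5 (c α β β' : ℝ) (hc : 0 < c) (hβ : 0 ≤ β) (hββ' : β ≤ β')
    (hmain : 0 < 2 * β' - β + 1 - α) :
    ∃ C : ℝ, 0 < C ∧ ∀ t : ℝ, 0 ≤ t → ∀ ξ : ℝ,
      (∫ η in {η : ℝ | Real.sqrt (ξ ^ 2 + η ^ 2) ≤ 1 ∧ |ξ| ≤ ξ ^ 2 + η ^ 2},
          |ξ| ^ β' * (ξ ^ 2 + η ^ 2) ^ (-α / 2) *
            Real.exp (-c * ξ ^ 2 * t / (ξ ^ 2 + η ^ 2)))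
        ≤ C * (1 + t) ^ (-β / 2) := by
  set δ := 2 * β' - β - α
  set D := (max 1 c⁻¹ * max 1 (β / 2)) ^ (β / 2)
  have hg := integrableOn_one_add_abs_rpow (show -1 < δ by linarith)
  have hI : 0 < ∫ η in Icc (-1 : ℝ) 1, (1 + |η| ^ δ) := calc
    (0 : ℝ) < ∫ _ in Icc (-1 : ℝ) 1, 1 := by simp
    _ ≤ ∫ η in Icc (-1 : ℝ) 1, (1 + |η| ^ δ) :=
      setIntegral_mono (integrableOn_const measure_Icc_lt_top.ne) hg fun η => by
        linarith [rpow_nonneg (abs_nonneg η) δ]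
  refine ⟨D * ∫ η in Icc (-1 : ℝ) 1, (1 + |η| ^ δ), by positivity, fun t ht ξ => ?_⟩
  have hS : MeasurableSet {η : ℝ | √(ξ ^ 2 + η ^ 2) ≤ 1 ∧ |ξ| ≤ ξ ^ 2 + η ^ 2} :=
    (measurableSet_le (by fun_prop : Measurable fun η : ℝ => √(ξ ^ 2 + η ^ 2))
      measurable_const).inter
      (measurableSet_le measurable_const (by fun_prop : Measurable fun η : ℝ => ξ ^ 2 + η ^ 2))
  have hSI : {η : ℝ | √(ξ ^ 2 + η ^ 2) ≤ 1 ∧ |ξ| ≤ ξ ^ 2 + η ^ 2} ⊆ Icc (-1) 1 :=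
    fun η hη => abs_le.1 ((sq_le_one_iff_abs_le_one η).1 (by nlinarith [sqrt_le_one.1 hη.1]))
  calc _ ≤ ∫ η in Icc (-1 : ℝ) 1, D * (1 + t) ^ (-β / 2) * (1 + |η| ^ δ) := by
        refine setIntegral_le_setIntegral_of_subset hSI (ae_of_all _ fun η => by positivity)
          (ae_of_all _ fun η => by positivity) (hg.const_mul _) ?_
        filter_upwards [ae_restrict_mem hS, ae_restrict_of_ae (volume.ae_ne 0)]
          with η ⟨hsqrt, hξs⟩ hη
        have hs1 : ξ ^ 2 + η ^ 2 ≤ 1 := sqrt_le_one.1 hsqrt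
        grw [abs_rpow_mul_rpow_mul_exp_le hc hβ hββ' ht (by positivity) hξs
          (le_add_of_nonneg_right (sq_nonneg η)),
          rpow_half_le_one_add_abs_rpow δ hη (le_add_of_nonneg_left (sq_nonneg ξ)) hs1]
    _ = _ := by rw [integral_const_mul]; ring
end

section
/- Let ξ, η ∈ ℝ, A = √(ξ²+η²) > 0. If (1/4)A⁴ - A² + A|η| ≥ (1/36)A⁴, then -2ξ²/A² ≤ -A²/2 + √((1/4)A⁴ - A² + A|η|) ≤ -ξ²/(2A²). -/
/-!
Write `D = A⁴/4 - A² + A|η|` and `s = √D`. Since `A² = ξ² + η²`,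
`A⁴/4 - s² = A(A - |η|) = Aξ² / (A + |η|)`, so `A²/2 - s = Aξ² / ((A²/2 + s)(A + |η|))`.
The hypothesis gives `A²/6 ≤ s`, and `|η| ≤ A` gives `s ≤ A²/2`, so the denominator lies between
`2A³/3` and `2A³`, which puts `A²/2 - s` between `ξ²/(2A²)` and `3ξ²/(2A²)`.
-/

open Real

lemma sq_add_sq_pos_of_ne {ξ η : ℝ} (h : (ξ, η) ≠ (0, 0)) : 0 < ξ ^ 2 + η ^ 2 := by
  rcases not_and_or.mp (mt Prod.ext_iff.mpr h) with hξ | hη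
  · positivity
  · positivity

section

variable {ξ η A : ℝ}

lemma abs_le_of_sq_eq_sq_add_sq (hA : 0 ≤ A) (hA2 : A ^ 2 = ξ ^ 2 + η ^ 2) : |η| ≤ A :=
  abs_le_of_sq_le_sq (by nlinarith [sq_nonneg ξ]) hA

lemma half_sq_sub_sqrt_mul_eq (hA2 : A ^ 2 = ξ ^ 2 + η ^ 2)
    (hD : 0 ≤ (1 / 4) * A ^ 4 - A ^ 2 + A * |η|) :
    (A ^ 2 / 2 - √((1 / 4) * A ^ 4 - A ^ 2 + A * |η|)) *
      ((A ^ 2 / 2 + √((1 / 4) * A ^ 4 - A ^ 2 + A * |η|)) * (A + |η|)) = A * ξ ^ 2 := by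
  linear_combination (-(A + |η|)) * sq_sqrt hD + A * hA2 - A * sq_abs η

lemma sqrt_mem_Icc_of_le (hA : 0 ≤ A) (hηA : |η| ≤ A)
    (hyp : (1 / 36) * A ^ 4 ≤ (1 / 4) * A ^ 4 - A ^ 2 + A * |η|) :
    √((1 / 4) * A ^ 4 - A ^ 2 + A * |η|) ∈ Set.Icc (A ^ 2 / 6) (A ^ 2 / 2) := by
  constructor
  · exact le_sqrt_of_sq_le (by linarith)
  · exact (sqrt_le_left (by positivity)).2 (by nlinarith [mul_le_mul_of_nonneg_left hηA hA])

lemma half_sq_sub_sqrt_mem_Icc (hA : 0 < A) (hA2 : A ^ 2 = ξ ^ 2 + η ^ 2)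
    (hyp : (1 / 36) * A ^ 4 ≤ (1 / 4) * A ^ 4 - A ^ 2 + A * |η|) :
    A ^ 2 / 2 - √((1 / 4) * A ^ 4 - A ^ 2 + A * |η|) ∈
      Set.Icc (ξ ^ 2 / (2 * A ^ 2)) (3 * ξ ^ 2 / (2 * A ^ 2)) := by
  have hηA := abs_le_of_sq_eq_sq_add_sq hA.le hA2
  obtain ⟨hs_lb, hs_ub⟩ := sqrt_mem_Icc_of_le hA.le hηA hyp
  set s := √((1 / 4) * A ^ 4 - A ^ 2 + A * |η|)
  have hP_lb : 2 / 3 * A ^ 3 ≤ (A ^ 2 / 2 + s) * (A + |η|) := by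
    have := mul_le_mul (add_le_add_right hs_lb (A ^ 2 / 2))
      (le_add_of_nonneg_right (abs_nonneg η)) hA.le (by positivity)
    linarith
  have hP_ub : (A ^ 2 / 2 + s) * (A + |η|) ≤ 2 * A ^ 3 := by
    have := mul_le_mul (add_le_add_right hs_ub (A ^ 2 / 2)) (add_le_add_right hηA A)
      (by positivity) (by positivity)
    linarith
  have hA3 : 0 < A ^ 3 := by positivity
  have hξ : 0 ≤ A * ξ ^ 2 := by positivity
  have ht : A ^ 2 / 2 - s = A * ξ ^ 2 / ((A ^ 2 / 2 + s) * (A + |η|)) :=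
    eq_div_of_mul_eq (by positivity)
      (half_sq_sub_sqrt_mul_eq hA2 (le_trans (by positivity) hyp))
  rw [ht]
  constructor
  · calc ξ ^ 2 / (2 * A ^ 2) = A * ξ ^ 2 / (2 * A ^ 3) := by field_simp
      _ ≤ _ := div_le_div_of_nonneg_left hξ (by linarith) hP_ub
  · calc _ ≤ A * ξ ^ 2 / (2 / 3 * A ^ 3) := div_le_div_of_nonneg_left hξ (by positivity) hP_lb
      _ = 3 * ξ ^ 2 / (2 * A ^ 2) := by field_simp

end

/-- For `(ξ, η) ≠ (0,0)`, `A = √(ξ²+η²)`: if `(1/4)A⁴ - A² + A|η| ≥ (1/36)A⁴` then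
`-2ξ²/A² ≤ -A²/2 + √((1/4)A⁴ - A² + A|η|) ≤ -ξ²/(2A²)`. -/
theorem stmt9 (ξ η A : ℝ) (hA : A = Real.sqrt (ξ ^ 2 + η ^ 2)) (h : (ξ, η) ≠ (0, 0))
    (hyp : (1 / 36) * A ^ 4 ≤ (1 / 4) * A ^ 4 - A ^ 2 + A * |η|) :
    -2 * ξ ^ 2 / A ^ 2 ≤ -A ^ 2 / 2 + Real.sqrt ((1 / 4) * A ^ 4 - A ^ 2 + A * |η|) ∧
    -A ^ 2 / 2 + Real.sqrt ((1 / 4) * A ^ 4 - A ^ 2 + A * |η|) ≤ -ξ ^ 2 / (2 * A ^ 2) := by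
  have hpos := sq_add_sq_pos_of_ne h
  have hA0 : 0 < A := hA ▸ sqrt_pos.2 hpos
  have hA2 : A ^ 2 = ξ ^ 2 + η ^ 2 := hA ▸ sq_sqrt hpos.le
  obtain ⟨h_lb, h_ub⟩ := half_sq_sub_sqrt_mem_Icc hA0 hA2 hyp
  have hq : 0 ≤ ξ ^ 2 / A ^ 2 := by positivity
  have e1 : -2 * ξ ^ 2 / A ^ 2 = -2 * (ξ ^ 2 / A ^ 2) := by ring
  have e2 : 3 * ξ ^ 2 / (2 * A ^ 2) = 3 / 2 * (ξ ^ 2 / A ^ 2) := by ring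
  have e3 : -ξ ^ 2 / (2 * A ^ 2) = -(ξ ^ 2 / (2 * A ^ 2)) := by ring
  constructor <;> linarith
end

section
/- Let ξ, η ∈ ℝ, A = √(ξ²+η²). If A|η| ≤ (1/2)A² and (1/4)A⁴ - A² + A|η| ≥ 0, then A ≥ 1 and -A²/2 + √((1/4)A⁴ - A² + A|η|) ≤ -1/2. -/
/-! Writing `t = A|η| ≤ A²/2`, the quantity `A⁴/4 - A² + t` is squeezed between `0` and
`A²(A² - 2)/4`, which forces `A² ≥ 2` once `A > 0`; and it is at most
`A⁴/4 - A²/2 + 1/4 = (A²/2 - 1/2)²`, which bounds its square root. -/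

lemma sqrt_sq_add_sq_pos {x y : ℝ} (h : (x, y) ≠ (0, 0)) : 0 < √(x ^ 2 + y ^ 2) := by
  have hxy : x ≠ 0 ∨ y ≠ 0 := by
    contrapose! h
    simp [h.1, h.2]
  apply Real.sqrt_pos.mpr
  rcases hxy with hx | hy <;> positivity

lemma two_le_sq_of_quartic_nonneg {A t : ℝ} (hA : 0 < A) (ht : t ≤ (1 / 2) * A ^ 2)
    (h : 0 ≤ (1 / 4) * A ^ 4 - A ^ 2 + t) : 2 ≤ A ^ 2 := by
  have hA2 : 0 < A ^ 2 := by positivity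
  nlinarith

lemma sqrt_quartic_le {A t : ℝ} (hA : 1 ≤ A ^ 2) (ht : t ≤ (1 / 2) * A ^ 2) :
    √((1 / 4) * A ^ 4 - A ^ 2 + t) ≤ A ^ 2 / 2 - 1 / 2 := by
  apply Real.sqrt_le_iff.mpr
  constructor
  · linarith
  · nlinarith

/-- For `(ξ, η) ≠ (0,0)`, `A = √(ξ²+η²)`: if `A|η| ≤ (1/2)A²` and
`(1/4)A⁴ - A² + A|η| ≥ 0`, then `A ≥ 1` and
`-A²/2 + √((1/4)A⁴ - A² + A|η|) ≤ -1/2`. -/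
theorem stmt10 (ξ η A : ℝ) (hA : A = Real.sqrt (ξ ^ 2 + η ^ 2)) (hne : (ξ, η) ≠ (0, 0))
    (h1 : A * |η| ≤ (1 / 2) * A ^ 2) (h2 : 0 ≤ (1 / 4) * A ^ 4 - A ^ 2 + A * |η|) :
    1 ≤ A ∧ -A ^ 2 / 2 + Real.sqrt ((1 / 4) * A ^ 4 - A ^ 2 + A * |η|) ≤ -(1 / 2) := by
  have hA0 : 0 < A := hA ▸ sqrt_sq_add_sq_pos hne
  have hA2 : 2 ≤ A ^ 2 := two_le_sq_of_quartic_nonneg hA0 h1 h2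
  have hA1 : 1 ≤ A := by nlinarith
  have hsqrt := sqrt_quartic_le (by linarith) h1
  exact ⟨hA1, by linarith⟩
end

section
/- Fix ξ, η ∈ ℝ and set A² = ξ² + η². Suppose n, u, v, ψ : ℝ → ℂ are smooth functions satisfying the linear ODE system n' = -iξ u - iη v, u' = -A² u - iξ n, v' = -A² v - iη n + A² ψ, ψ' = -v. Then n satisfies the scalar fourth-order ODE ((∂_tt + A²∂_t + A²)² - A²η²) n = 0. -/
/-- The second-order operator `∂_tt + A² ∂_t + A²` acting on functions of time
(Fourier side of `∂_tt - Δ∂_t - Δ` at the frequency with `A² = ξ² + η²`). -/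
noncomputable def Lop (A2 : ℂ) (f : ℝ → ℂ) : ℝ → ℂ :=
  fun t => deriv (deriv f) t + A2 * deriv f t + A2 * f t

/-- Diagonalization on the Fourier side: if `(n, u, v, ψ)` are smooth solutions of the
linearized compressible MHD system at fixed frequencies `(ξ, η)` (with `λ = 0` and no
forcing), then `n` satisfies `((∂_tt + A²∂_t + A²)² - A²η²) n = 0` where `A² = ξ² + η²`. -/
theorem stmt12 (ξ η : ℝ) (n u v ψ : ℝ → ℂ)
    (hn : ContDiff ℝ (⊤ : ℕ∞) n) (hu : ContDiff ℝ (⊤ : ℕ∞) u) (hv : ContDiff ℝ (⊤ : ℕ∞) v) (hψ : ContDiff ℝ (⊤ : ℕ∞) ψ)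
    (heqn : ∀ t, deriv n t = -Complex.I * (ξ : ℂ) * u t - Complex.I * (η : ℂ) * v t)
    (hequ : ∀ t, deriv u t = -((ξ : ℂ) ^ 2 + (η : ℂ) ^ 2) * u t - Complex.I * (ξ : ℂ) * n t)
    (heqv : ∀ t, deriv v t = -((ξ : ℂ) ^ 2 + (η : ℂ) ^ 2) * v t - Complex.I * (η : ℂ) * n t
        + ((ξ : ℂ) ^ 2 + (η : ℂ) ^ 2) * ψ t)
    (heqψ : ∀ t, deriv ψ t = -v t) :
    ∀ t, Lop ((ξ : ℂ) ^ 2 + (η : ℂ) ^ 2) (Lop ((ξ : ℂ) ^ 2 + (η : ℂ) ^ 2) n) t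
        = ((ξ : ℂ) ^ 2 + (η : ℂ) ^ 2) * (η : ℂ) ^ 2 * n t := by
  have hud : Differentiable ℝ u := hu.differentiable (by simp)
  have hvd : Differentiable ℝ v := hv.differentiable (by simp)
  have hψd : Differentiable ℝ ψ := hψ.differentiable (by simp)
  set a : ℂ := ((ξ : ℂ) ^ 2 + (η : ℂ) ^ 2) with ha
  -- second derivative of n
  have hdn : deriv n = fun t => -Complex.I * (ξ : ℂ) * u t - Complex.I * (η : ℂ) * v t :=
    funext heqn
  have hn2 : ∀ s, deriv (deriv n) s
      = -Complex.I * (ξ : ℂ) * deriv u s - Complex.I * (η : ℂ) * deriv v s := by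
    intro s
    rw [hdn]
    exact (((hud s).hasDerivAt.const_mul (-Complex.I * (ξ : ℂ))).sub
      ((hvd s).hasDerivAt.const_mul (Complex.I * (η : ℂ)))).deriv
  -- first application of L
  have hLn : ∀ s, Lop a n s = (-Complex.I * (η : ℂ) * a) * ψ s := by
    intro s
    simp only [Lop, hn2 s, hequ s, heqv s, heqn s]
    linear_combination (a * n s) * Complex.I_sq
  set c : ℂ := -Complex.I * (η : ℂ) * a with hc
  have hLnf : Lop a n = fun s => c * ψ s := funext hLn
  -- derivatives of c * ψ
  have hd1 : deriv (fun s => c * ψ s) = fun s => -c * v s := by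
    funext s
    rw [((hψd s).hasDerivAt.const_mul c).deriv, heqψ s]
    ring
  intro t
  have hd2 : deriv (fun s => -c * v s) t = -c * deriv v t :=
    ((hvd t).hasDerivAt.const_mul (-c)).deriv
  conv_lhs => rw [hLnf]
  simp only [Lop, hd1, hd2, heqv t, heqψ t]
  simp only [hc]
  linear_combination (-(η : ℂ) ^ 2 * a * n t) * Complex.I_sq
end
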